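/- For all real ℓ > 0 and all real x, y > 1, F(ℓ, x, y) ≥ 0, where F(ℓ,x,y) = sinh³ℓ·xy − (cosh³ℓ − 3coshℓ + 2)(x + y) + sinh³ℓ − 6sinhℓ − 6ℓ + 6·arctanh(1/x) + 2x/(x²−1) + 6·arctanh(1/y) + 2y/(y²−1); moreover F(ℓ,x,y) = 0 only if x = y = coth(ℓ/2). -/

import Mathlib

open Real

/-- The real inverse hyperbolic tangent. -/
noncomputable def arctanh (x : ℝ) : ℝ := Real.log ((1 + x) / (1 - x)) / 2

/-- The function `F` of Kloeckner–Kuperberg, Lemma 7.4. -/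
noncomputable def F (ℓ x y : ℝ) : ℝ :=
  Real.sinh ℓ ^ 3 * (x * y) - (Real.cosh ℓ ^ 3 - 3 * Real.cosh ℓ + 2) * (x + y)
    + Real.sinh ℓ ^ 3 - 6 * Real.sinh ℓ - 6 * ℓ
    + 6 * arctanh (1 / x) + 2 * x / (x ^ 2 - 1)
    + 6 * arctanh (1 / y) + 2 * y / (y ^ 2 - 1)

/-- `coth t = cosh t / sinh t`. -/
noncomputable def coth (t : ℝ) : ℝ := Real.cosh t / Real.sinh t


lemma QId (c C : ℝ) :
    ((c^3-3*c+2)*(C-1)+(C+3)*(C-1)^2)^2 - (c^2-1)^3*(C^2-1)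
      = (C-1)*(C-c)*(16*(c-1)^2+24*(c-1)^3+12*(c-1)^4+2*(c-1)^5
        +16*(C-1)*(c-1)+32*(C-1)*(c-1)^2+15*(C-1)*(c-1)^3+2*(C-1)*(c-1)^4
        +16*(C-1)^2+8*(C-1)^2*(c-1)+7*(C-1)^2*(c-1)^2+2*(C-1)^2*(c-1)^3
        +8*(C-1)^3+(C-1)^3*(c-1)+(C-1)^4) := by ring

lemma Rpos {c C : ℝ} (hc : 1 < c) (hC : 1 < C) :
    0 < 16*(c-1)^2+24*(c-1)^3+12*(c-1)^4+2*(c-1)^5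
        +16*(C-1)*(c-1)+32*(C-1)*(c-1)^2+15*(C-1)*(c-1)^3+2*(C-1)*(c-1)^4
        +16*(C-1)^2+8*(C-1)^2*(c-1)+7*(C-1)^2*(c-1)^2+2*(C-1)^2*(c-1)^3
        +8*(C-1)^3+(C-1)^3*(c-1)+(C-1)^4 := by
  have ha : 0 < C - 1 := by linarith
  have hb : 0 < c - 1 := by linarith
  have h1 : 0 < 16*(c-1)^2 := by positivity
  nlinarith [pow_pos ha 2, pow_pos ha 3, pow_pos ha 4, pow_pos hb 2, pow_pos hb 3,
    pow_pos hb 4, pow_pos hb 5, mul_pos ha hb, mul_pos (pow_pos ha 2) hb,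
    mul_pos ha (pow_pos hb 2), mul_pos (pow_pos ha 2) (pow_pos hb 2),
    mul_pos (pow_pos ha 3) hb, mul_pos ha (pow_pos hb 3),
    mul_pos (pow_pos ha 2) (pow_pos hb 3), mul_pos ha (pow_pos hb 4)]

noncomputable def Phi (l w : ℝ) : ℝ :=
  2*(Real.sinh l^3*Real.cosh w - (Real.cosh l^3-3*Real.cosh l+2)*Real.sinh w)/(Real.cosh w - 1)
    + 2*Real.sinh w + 6*w - 6*Real.sinh l - 6*l

lemma phi_self {l : ℝ} (hl : 0 < l) : Phi l l = 0 := by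
  have hc : 1 < Real.cosh l := Real.one_lt_cosh.2 (ne_of_gt hl)
  have hs2 : Real.sinh l^2 = Real.cosh l^2 - 1 := Real.sinh_sq l
  have hne : Real.cosh l - 1 ≠ 0 := by linarith
  unfold Phi
  field_simp
  linear_combination (2*Real.sinh l*Real.cosh l) * hs2

lemma phi_hasDeriv (l : ℝ) {w : ℝ} (hw : 0 < w) :
    HasDerivAt (Phi l)
      (2*((Real.cosh l^3-3*Real.cosh l+2)*(Real.cosh w-1)
        + (Real.cosh w+3)*(Real.cosh w-1)^2 - Real.sinh l^3*Real.sinh w)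
       /(Real.cosh w-1)^2) w := by
  have hC : 1 < Real.cosh w := Real.one_lt_cosh.2 (ne_of_gt hw)
  have hne : Real.cosh w - 1 ≠ 0 := by linarith
  have hS2 : Real.sinh w^2 = Real.cosh w^2 - 1 := Real.sinh_sq w
  have h1 : HasDerivAt (fun t => Real.sinh l^3*Real.cosh t - (Real.cosh l^3-3*Real.cosh l+2)*Real.sinh t)
      (Real.sinh l^3*Real.sinh w - (Real.cosh l^3-3*Real.cosh l+2)*Real.cosh w) w :=
    ((Real.hasDerivAt_cosh w).const_mul _).sub ((Real.hasDerivAt_sinh w).const_mul _)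
  have h2 : HasDerivAt (fun t => Real.cosh t - 1) (Real.sinh w) w :=
    (Real.hasDerivAt_cosh w).sub_const 1
  have h3 := (h1.div h2 hne).const_mul 2
  have h4 := ((Real.hasDerivAt_sinh w).const_mul 2)
  have h5 : HasDerivAt (fun t : ℝ => 6*t) 6 w := by
    simpa using (hasDerivAt_id w).const_mul 6
  have h6 := (((h3.add h4).add h5).sub_const (6*Real.sinh l)).sub_const (6*l)
  have hfun : Phi l = (fun x => 2 * ((Real.sinh l ^ 3 * Real.cosh x - (Real.cosh l ^ 3 - 3 * Real.cosh l + 2) * Real.sinh x) / (Real.cosh x - 1)) + 2 * Real.sinh x + 6 * x - 6 * Real.sinh l - 6 * l) := by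
    funext t; unfold Phi; ring
  have hD : 2*((Real.cosh l^3-3*Real.cosh l+2)*(Real.cosh w-1)
        + (Real.cosh w+3)*(Real.cosh w-1)^2 - Real.sinh l^3*Real.sinh w)
       /(Real.cosh w-1)^2
      = 2 * (((Real.sinh l ^ 3 * Real.sinh w - (Real.cosh l ^ 3 - 3 * Real.cosh l + 2) * Real.cosh w) * (Real.cosh w - 1) -
          (Real.sinh l ^ 3 * Real.cosh w - (Real.cosh l ^ 3 - 3 * Real.cosh l + 2) * Real.sinh w) * Real.sinh w) /
        (Real.cosh w - 1) ^ 2) + 2 * Real.cosh w + 6 := by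
    field_simp
    linear_combination (-2*(Real.cosh l^3-3*Real.cosh l+2)) * hS2
  rw [hfun, hD]
  exact h6

lemma psi_pos {l w : ℝ} (hl : 0 < l) (h : l < w) :
    0 < (Real.cosh l^3-3*Real.cosh l+2)*(Real.cosh w-1)
        + (Real.cosh w+3)*(Real.cosh w-1)^2 - Real.sinh l^3*Real.sinh w := by
  set c := Real.cosh l with hcdef
  set C := Real.cosh w with hCdef
  have hc : 1 < c := Real.one_lt_cosh.2 (ne_of_gt hl)
  have hw : 0 < w := lt_trans hl h
  have hC : 1 < C := Real.one_lt_cosh.2 (ne_of_gt hw)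
  have hcC : c < C := Real.cosh_lt_cosh.2 (by rw [abs_of_pos hl, abs_of_pos hw]; exact h)
  have hs : 0 < Real.sinh l := Real.sinh_pos_iff.2 hl
  have hS : 0 < Real.sinh w := Real.sinh_pos_iff.2 hw
  have hs2 : Real.sinh l^2 = c^2 - 1 := Real.sinh_sq l
  have hS2 : Real.sinh w^2 = C^2 - 1 := Real.sinh_sq w
  have hQ := QId c C
  have hR := Rpos hc hC
  have hRHSpos : 0 < (c^3-3*c+2)*(C-1)+(C+3)*(C-1)^2 := by
    nlinarith [mul_nonneg (mul_nonneg (sq_nonneg (c-1)) (le_of_lt (show (0:ℝ)<c+2 by linarith))) (le_of_lt (show (0:ℝ)<C-1 by linarith)), mul_pos (show (0:ℝ)<C+3 by linarith) (pow_pos (show (0:ℝ)<C-1 by linarith) 2)]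
  have hsq : (Real.sinh l^3*Real.sinh w)^2 < ((c^3-3*c+2)*(C-1)+(C+3)*(C-1)^2)^2 := by
    have h1 : (Real.sinh l^3*Real.sinh w)^2 = (c^2-1)^3*(C^2-1) := by
      linear_combination (Real.sinh l^4*Real.sinh w^2 + (c^2-1)*Real.sinh l^2*Real.sinh w^2 + (c^2-1)^2*Real.sinh w^2) * hs2 + (c^2-1)^3 * hS2
    rw [h1]
    nlinarith [mul_pos (mul_pos (show (0:ℝ) < C - 1 by linarith) (show (0:ℝ) < C - c by linarith)) hR]
  have hLpos : 0 < Real.sinh l^3*Real.sinh w := by positivity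
  nlinarith [lt_of_pow_lt_pow_left₀ 2 hRHSpos.le hsq]

lemma psi_neg {l w : ℝ} (hw : 0 < w) (h : w < l) :
    (Real.cosh l^3-3*Real.cosh l+2)*(Real.cosh w-1)
        + (Real.cosh w+3)*(Real.cosh w-1)^2 - Real.sinh l^3*Real.sinh w < 0 := by
  set c := Real.cosh l with hcdef
  set C := Real.cosh w with hCdef
  have hl : 0 < l := lt_trans hw h
  have hc : 1 < c := Real.one_lt_cosh.2 (ne_of_gt hl)
  have hC : 1 < C := Real.one_lt_cosh.2 (ne_of_gt hw)
  have hcC : C < c := Real.cosh_lt_cosh.2 (by rw [abs_of_pos hl, abs_of_pos hw]; exact h)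
  have hs : 0 < Real.sinh l := Real.sinh_pos_iff.2 hl
  have hS : 0 < Real.sinh w := Real.sinh_pos_iff.2 hw
  have hs2 : Real.sinh l^2 = c^2 - 1 := Real.sinh_sq l
  have hS2 : Real.sinh w^2 = C^2 - 1 := Real.sinh_sq w
  have hQ := QId c C
  have hR := Rpos hc hC
  have hRHSpos : 0 < (c^3-3*c+2)*(C-1)+(C+3)*(C-1)^2 := by
    nlinarith [mul_nonneg (mul_nonneg (sq_nonneg (c-1)) (le_of_lt (show (0:ℝ)<c+2 by linarith))) (le_of_lt (show (0:ℝ)<C-1 by linarith)), mul_pos (show (0:ℝ)<C+3 by linarith) (pow_pos (show (0:ℝ)<C-1 by linarith) 2)]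
  have hsq : ((c^3-3*c+2)*(C-1)+(C+3)*(C-1)^2)^2 < (Real.sinh l^3*Real.sinh w)^2 := by
    have h1 : (Real.sinh l^3*Real.sinh w)^2 = (c^2-1)^3*(C^2-1) := by
      linear_combination (Real.sinh l^4*Real.sinh w^2 + (c^2-1)*Real.sinh l^2*Real.sinh w^2 + (c^2-1)^2*Real.sinh w^2) * hs2 + (c^2-1)^3 * hS2
    rw [h1]
    nlinarith [mul_pos (show (0:ℝ) < C - 1 by linarith) (mul_pos (show (0:ℝ) < c - C by linarith) hR)]
  have hLpos : 0 < Real.sinh l^3*Real.sinh w := by positivity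
  nlinarith [lt_of_pow_lt_pow_left₀ 2 hLpos.le hsq]

lemma phi_pos {l w : ℝ} (hl : 0 < l) (hw : 0 < w) (hne : w ≠ l) : 0 < Phi l w := by
  rcases lt_or_gt_of_ne hne with hlt | hgt
  · have hanti : StrictAntiOn (Phi l) (Set.Icc w l) := by
      apply strictAntiOn_of_deriv_neg (convex_Icc w l)
      · intro z hz
        exact ((phi_hasDeriv l (lt_of_lt_of_le hw hz.1)).continuousAt).continuousWithinAt
      · intro z hz
        rw [interior_Icc] at hz
        have hz0 : 0 < z := lt_trans hw hz.1
        rw [(phi_hasDeriv l hz0).deriv]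
        apply div_neg_of_neg_of_pos
        · have := psi_neg hz0 hz.2
          linarith
        · exact pow_pos (show (0:ℝ) < Real.cosh z - 1 by
            have hC : 1 < Real.cosh z := Real.one_lt_cosh.2 (ne_of_gt hz0); linarith) 2
    have := hanti (Set.left_mem_Icc.2 hlt.le) (Set.right_mem_Icc.2 hlt.le) hlt
    rw [phi_self hl] at this
    exact this
  · have hmono : StrictMonoOn (Phi l) (Set.Icc l w) := by
      apply strictMonoOn_of_deriv_pos (convex_Icc l w)
      · intro z hz
        exact ((phi_hasDeriv l (lt_of_lt_of_le hl hz.1)).continuousAt).continuousWithinAt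
      · intro z hz
        rw [interior_Icc] at hz
        have hz0 : 0 < z := lt_trans hl hz.1
        rw [(phi_hasDeriv l hz0).deriv]
        apply div_pos
        · have := psi_pos hl hz.1
          linarith
        · exact pow_pos (show (0:ℝ) < Real.cosh z - 1 by
            have hC : 1 < Real.cosh z := Real.one_lt_cosh.2 (ne_of_gt hz0); linarith) 2
    have := hmono (Set.left_mem_Icc.2 hgt.le) (Set.right_mem_Icc.2 hgt.le) hgt
    rw [phi_self hl] at this
    exact this
lemma exists_param {x : ℝ} (hx : 1 < x) :
    ∃ u : ℝ, 0 < u ∧ arctanh (1/x) = u ∧ Real.cosh u = x * Real.sinh u ∧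
      0 < Real.sinh u ∧ Real.sinh u ^ 2 * (x^2 - 1) = 1 := by
  have hx0 : 0 < x := lt_trans one_pos hx
  have hx2 : 0 < x^2 - 1 := by nlinarith
  set r := Real.sqrt (x^2-1) with hrdef
  have hr : 0 < r := Real.sqrt_pos.2 hx2
  have hr2 : r^2 = x^2-1 := Real.sq_sqrt hx2.le
  have hsq : Real.sqrt (1 + (1/r)^2) = x / r := by
    rw [show 1 + (1/r)^2 = (x/r)^2 by field_simp; linarith [hr2]]
    exact Real.sqrt_sq (by positivity)
  refine ⟨Real.arsinh (1/r), Real.arsinh_pos_iff.2 (by positivity), ?_, ?_, ?_, ?_⟩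
  · unfold Real.arsinh
    rw [hsq]
    unfold arctanh
    rw [show (1 + 1/x)/(1 - 1/x) = ((1+x)/r)^2 by
      have h1 : x - 1 ≠ 0 := by linarith
      have h2 : (1:ℝ) - 1/x ≠ 0 := by
        rw [sub_ne_zero]; intro h; field_simp at h; linarith
      rw [div_pow, hr2]; field_simp; ring]
    rw [Real.log_pow]
    rw [show 1/r + x/r = (1+x)/r by ring]
    push_cast
    ring
  · rw [Real.sinh_arsinh, Real.cosh_arsinh, hsq]
    field_simp
  · rw [Real.sinh_arsinh]; positivity
  · rw [Real.sinh_arsinh]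
    rw [div_pow, one_pow, hr2]
    field_simp

set_option maxHeartbeats 2000000 in
theorem stmt2 (ℓ x y : ℝ) (hℓ : 0 < ℓ) (hx : 1 < x) (hy : 1 < y) :
    0 ≤ F ℓ x y ∧ (F ℓ x y = 0 → x = coth (ℓ / 2) ∧ y = coth (ℓ / 2)) := by
  obtain ⟨u, hu, hax, hcu, hsu, hsqx⟩ := exists_param hx
  obtain ⟨v, hv, hay, hcv, hcv', hsqy⟩ := exists_param hy
  have hw : 0 < u + v := by linarith
  have hCw : 1 < Real.cosh (u+v) := Real.one_lt_cosh.2 (ne_of_gt hw)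
  have hSw : 0 < Real.sinh (u+v) := Real.sinh_pos_iff.2 hw
  have hx2 : x^2 - 1 ≠ 0 := by nlinarith
  have hy2 : y^2 - 1 ≠ 0 := by nlinarith
  have hsu0 : Real.sinh u ≠ 0 := ne_of_gt hsu
  have hsv0 : Real.sinh v ≠ 0 := ne_of_gt hcv'
  have hgx : 2 * x / (x ^ 2 - 1) = 2 * (Real.sinh u * Real.cosh u) := by
    rw [hcu]; field_simp; linear_combination (-1) * hsqx
  have hgy : 2 * y / (y ^ 2 - 1) = 2 * (Real.sinh v * Real.cosh v) := by
    rw [hcv]; field_simp; linear_combination (-1) * hsqy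
  have hxy : x * y = (Real.cosh u * Real.cosh v) / (Real.sinh u * Real.sinh v) := by
    rw [hcu, hcv]; field_simp
  have hxpy : x + y = Real.sinh (u+v) / (Real.sinh u * Real.sinh v) := by
    rw [Real.sinh_add, hcu, hcv]; field_simp; ring
  have hC1' : 1 < Real.cosh u * Real.cosh v + Real.sinh u * Real.sinh v := by
    rw [← Real.cosh_add]; exact hCw
  have hC1 : Real.cosh u * Real.cosh v + Real.sinh u * Real.sinh v - 1 ≠ 0 := by linarith
  have hsum : 2*(Real.sinh u*Real.cosh u) + 2*(Real.sinh v*Real.cosh v)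
      = 2*Real.sinh (u+v)*Real.cosh (u-v) := by
    have hpu : Real.cosh u^2 = Real.sinh u^2 + 1 := Real.cosh_sq u
    have hpv : Real.cosh v^2 = Real.sinh v^2 + 1 := Real.cosh_sq v
    rw [Real.sinh_add, Real.cosh_sub]
    linear_combination (-2*Real.sinh u*Real.cosh u) * hpv + (-2*Real.sinh v*Real.cosh v) * hpu
  have hFeq0 : F ℓ x y = Phi ℓ (u+v) + (Real.cosh (u-v) - 1) *
      ((Real.sinh ℓ^3 * Real.cosh (u+v) - (Real.cosh ℓ^3 - 3*Real.cosh ℓ + 2) * Real.sinh (u+v))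
        / ((Real.sinh u * Real.sinh v) * (Real.cosh (u+v) - 1)))
      + (2*(Real.sinh u*Real.cosh u) + 2*(Real.sinh v*Real.cosh v) - 2*Real.sinh (u+v)) := by
    unfold F Phi
    rw [hax, hay, hgx, hgy, hxy, hxpy]
    rw [show Real.cosh (u-v) = Real.cosh u * Real.cosh v - Real.sinh u * Real.sinh v from Real.cosh_sub u v]
    rw [show Real.cosh (u+v) = Real.cosh u * Real.cosh v + Real.sinh u * Real.sinh v from Real.cosh_add u v]
    field_simp
    ring
  have hFeq : F ℓ x y = Phi ℓ (u+v) + (Real.cosh (u-v) - 1) *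
      ((Real.sinh ℓ^3 * Real.cosh (u+v) - (Real.cosh ℓ^3 - 3*Real.cosh ℓ + 2) * Real.sinh (u+v))
        / ((Real.sinh u * Real.sinh v) * (Real.cosh (u+v) - 1)) + 2 * Real.sinh (u+v)) := by
    rw [hFeq0, hsum]; ring
  have hsl : 0 < Real.sinh ℓ := Real.sinh_pos_iff.2 hℓ
  have hcl : 1 < Real.cosh ℓ := Real.one_lt_cosh.2 (ne_of_gt hℓ)
  have hs2 : Real.sinh ℓ^2 = Real.cosh ℓ^2 - 1 := Real.sinh_sq ℓ
  have hA_lt : Real.cosh ℓ^3 - 3*Real.cosh ℓ + 2 < Real.sinh ℓ^3 := by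
    have h7 : (Real.sinh ℓ^3-(Real.cosh ℓ^3-3*Real.cosh ℓ+2))*(Real.sinh ℓ^3+(Real.cosh ℓ^3-3*Real.cosh ℓ+2))
        = (Real.cosh ℓ-1)^3*(3*Real.cosh ℓ+5) := by
      linear_combination (Real.sinh ℓ^4 + Real.sinh ℓ^2*(Real.cosh ℓ^2-1) + (Real.cosh ℓ^2-1)^2) * hs2
    have hApos : 0 ≤ Real.cosh ℓ^3-3*Real.cosh ℓ+2 := by
      nlinarith [mul_nonneg (sq_nonneg (Real.cosh ℓ-1)) (show (0:ℝ) ≤ Real.cosh ℓ+2 by linarith)]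
    have h8 : 0 < Real.sinh ℓ^3+(Real.cosh ℓ^3-3*Real.cosh ℓ+2) := by positivity
    nlinarith [mul_pos (pow_pos (show (0:ℝ) < Real.cosh ℓ-1 by linarith) 3)
      (show (0:ℝ) < 3*Real.cosh ℓ+5 by linarith)]
  have hCS : Real.sinh (u+v) < Real.cosh (u+v) := by
    nlinarith [Real.cosh_sub_sinh (u+v), Real.exp_pos (-(u+v))]
  have hN : 0 < Real.sinh ℓ^3 * Real.cosh (u+v)
      - (Real.cosh ℓ^3 - 3*Real.cosh ℓ + 2) * Real.sinh (u+v) := by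
    nlinarith [mul_pos hSw (sub_pos.2 hA_lt), mul_pos (pow_pos hsl 3) (sub_pos.2 hCS)]
  have hK : 0 < (Real.sinh ℓ^3 * Real.cosh (u+v) - (Real.cosh ℓ^3 - 3*Real.cosh ℓ + 2) * Real.sinh (u+v))
        / ((Real.sinh u * Real.sinh v) * (Real.cosh (u+v) - 1)) + 2 * Real.sinh (u+v) := by
    have := div_pos hN (mul_pos (mul_pos hsu hcv') (show (0:ℝ) < Real.cosh (u+v) - 1 by linarith))
    linarith
  have hD1 : 1 ≤ Real.cosh (u-v) := Real.one_le_cosh _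
  have hPhi : 0 ≤ Phi ℓ (u+v) := by
    rcases eq_or_ne (u+v) ℓ with he | hne
    · rw [he, phi_self hℓ]
    · exact (phi_pos hℓ hw hne).le
  have hprod : 0 ≤ (Real.cosh (u-v) - 1) *
      ((Real.sinh ℓ^3 * Real.cosh (u+v) - (Real.cosh ℓ^3 - 3*Real.cosh ℓ + 2) * Real.sinh (u+v))
        / ((Real.sinh u * Real.sinh v) * (Real.cosh (u+v) - 1)) + 2 * Real.sinh (u+v)) :=
    mul_nonneg (by linarith) hK.le
  constructor
  · rw [hFeq]; linarith
  · intro hF0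
    rw [hFeq] at hF0
    have hD : Real.cosh (u-v) = 1 := by
      rcases mul_eq_zero.1 (by linarith : (Real.cosh (u-v) - 1) *
          ((Real.sinh ℓ^3 * Real.cosh (u+v) - (Real.cosh ℓ^3 - 3*Real.cosh ℓ + 2) * Real.sinh (u+v))
            / ((Real.sinh u * Real.sinh v) * (Real.cosh (u+v) - 1)) + 2 * Real.sinh (u+v)) = 0) with h | h
      · linarith
      · exact absurd h (ne_of_gt hK)
    have huv : u = v := by
      by_contra hne
      have h1 : u - v ≠ 0 := sub_ne_zero.2 hne
      have := Real.one_lt_cosh.2 h1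
      linarith
    have hPhi0 : Phi ℓ (u+v) = 0 := by rw [hD] at hF0; linarith
    have hwl : u + v = ℓ := by
      by_contra hne
      exact absurd hPhi0 (ne_of_gt (phi_pos hℓ hw hne))
    have hu2 : u = ℓ/2 := by rw [huv] at hwl ⊢; linarith
    have hv2 : v = ℓ/2 := by rw [← huv]; exact hu2
    constructor
    · rw [coth, ← hu2, hcu, mul_div_assoc, div_self hsu0, mul_one]
    · rw [coth, ← hv2, hcv, mul_div_assoc, div_self hsv0, mul_one]
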